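/- arXiv:2408.16868 — 3 statements merged into one kernel-verified Lean document; each statement's English description precedes it below -/
import Mathlib

section
/- If a matrix A satisfies the restricted isometry property of order 2k with constant δ_{2k} < 1, then for any two k-sparse vectors u, v with disjoint supports, |⟨Au, Av⟩| ≤ δ_{2k} ‖u‖₂ ‖v‖₂. -/
open Finset

/-- `x` is `s`-sparse: at most `s` nonzero entries. -/
def IsSparse {n : ℕ} (s : ℕ) (x : Fin n → ℝ) : Prop :=
  (Finset.univ.filter (fun i => x i ≠ 0)).card ≤ s

/-- `A` satisfies the restricted isometry property of order `s` with constant `δ`. -/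
def IsRIP {m n : ℕ} (A : Matrix (Fin m) (Fin n) ℝ) (s : ℕ) (δ : ℝ) : Prop :=
  ∀ x : Fin n → ℝ, IsSparse s x →
    (1 - δ) * ∑ i, x i ^ 2 ≤ ∑ j, A.mulVec x j ^ 2 ∧
      ∑ j, A.mulVec x j ^ 2 ≤ (1 + δ) * ∑ i, x i ^ 2

lemma sparse_add {n : ℕ} (k : ℕ) (u v : Fin n → ℝ) (hu : IsSparse k u)
    (hv : IsSparse k v) : IsSparse (2 * k) (u + v) := by
  unfold IsSparse at *
  calc (Finset.univ.filter (fun i => (u + v) i ≠ 0)).card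
      ≤ ((Finset.univ.filter (fun i => u i ≠ 0)) ∪
         (Finset.univ.filter (fun i => v i ≠ 0))).card := by
        apply Finset.card_le_card
        intro i hi
        simp only [Finset.mem_filter, Finset.mem_union, Finset.mem_univ, true_and] at *
        by_contra h
        push_neg at h
        exact hi (by simp [Pi.add_apply, h.1, h.2])
    _ ≤ _ := by
        refine le_trans (Finset.card_union_le _ _) ?_
        omega

lemma key_unit {m n k : ℕ} (A : Matrix (Fin m) (Fin n) ℝ) (δ : ℝ)
    (hRIP : IsRIP A (2 * k) δ)
    (u v : Fin n → ℝ) (hu : IsSparse k u) (hv : IsSparse k v)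
    (hdisj : ∀ i, u i = 0 ∨ v i = 0)
    (hnu : ∑ i, u i ^ 2 = 1) (hnv : ∑ i, v i ^ 2 = 1) :
    |∑ j, A.mulVec u j * A.mulVec v j| ≤ δ := by
  have hvneg : IsSparse k (-v) := by
    unfold IsSparse at *
    simpa using hv
  have hw := hRIP (u + v) (sparse_add k u v hu hv)
  have hz := hRIP (u + (-v)) (sparse_add k u (-v) hu hvneg)
  have hcross : ∀ i, u i * v i = 0 := fun i => by rcases hdisj i with h | h <;> simp [h]
  have hsw : ∑ i, (u + v) i ^ 2 = 2 := by
    have : ∀ i, (u + v) i ^ 2 = u i ^ 2 + v i ^ 2 := by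
      intro i
      have := hcross i
      simp only [Pi.add_apply]
      ring_nf
      nlinarith [hcross i]
    rw [Finset.sum_congr rfl (fun i _ => this i), Finset.sum_add_distrib, hnu, hnv]
    norm_num
  have hsz : ∑ i, (u + (-v)) i ^ 2 = 2 := by
    have : ∀ i, (u + (-v)) i ^ 2 = u i ^ 2 + v i ^ 2 := by
      intro i
      simp only [Pi.add_apply, Pi.neg_apply]
      nlinarith [hcross i]
    rw [Finset.sum_congr rfl (fun i _ => this i), Finset.sum_add_distrib, hnu, hnv]
    norm_num
  rw [hsw] at hw
  rw [hsz] at hz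
  have hAw : ∀ j, A.mulVec (u + v) j = A.mulVec u j + A.mulVec v j := by
    intro j; rw [Matrix.mulVec_add]; rfl
  have hAz : ∀ j, A.mulVec (u + (-v)) j = A.mulVec u j - A.mulVec v j := by
    intro j; rw [Matrix.mulVec_add, Matrix.mulVec_neg]; simp [sub_eq_add_neg]
  have hid : (∑ j, A.mulVec (u + v) j ^ 2) - (∑ j, A.mulVec (u + (-v)) j ^ 2)
      = 4 * ∑ j, A.mulVec u j * A.mulVec v j := by
    rw [← Finset.sum_sub_distrib, Finset.mul_sum]
    apply Finset.sum_congr rfl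
    intro j _
    rw [hAw j, hAz j]
    ring
  rw [abs_le]
  constructor <;> nlinarith [hw.1, hw.2, hz.1, hz.2]

/-- If `A` is RIP of order `2k` with constant `δ < 1`, then for any two `k`-sparse
vectors `u, v` with disjoint supports, `|⟨Au, Av⟩| ≤ δ ‖u‖₂ ‖v‖₂`. -/
theorem stmt_8 (m n k : ℕ) (A : Matrix (Fin m) (Fin n) ℝ) (δ : ℝ)
    (hδ : δ < 1) (hRIP : IsRIP A (2 * k) δ)
    (u v : Fin n → ℝ) (hu : IsSparse k u) (hv : IsSparse k v)
    (hdisj : ∀ i, u i = 0 ∨ v i = 0) :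
    |∑ j, A.mulVec u j * A.mulVec v j| ≤
      δ * Real.sqrt (∑ i, u i ^ 2) * Real.sqrt (∑ i, v i ^ 2) := by
  by_cases hu0 : u = 0
  · simp [hu0, Matrix.mulVec_zero]
  by_cases hv0 : v = 0
  · simp [hv0, Matrix.mulVec_zero]
  set a := Real.sqrt (∑ i, u i ^ 2) with ha
  set b := Real.sqrt (∑ i, v i ^ 2) with hb
  have hsu : 0 < ∑ i, u i ^ 2 := by
    rcases Function.ne_iff.mp hu0 with ⟨i, hi⟩
    have : 0 < u i ^ 2 := pow_pos (abs_pos.mpr hi) 2 |>.trans_le (by rw [sq_abs])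
    exact lt_of_lt_of_le this (Finset.single_le_sum (fun i _ => sq_nonneg (u i)) (Finset.mem_univ i))
  have hsv : 0 < ∑ i, v i ^ 2 := by
    rcases Function.ne_iff.mp hv0 with ⟨i, hi⟩
    have : 0 < v i ^ 2 := pow_pos (abs_pos.mpr hi) 2 |>.trans_le (by rw [sq_abs])
    exact lt_of_lt_of_le this (Finset.single_le_sum (fun i _ => sq_nonneg (v i)) (Finset.mem_univ i))
  have hap : 0 < a := Real.sqrt_pos.mpr hsu
  have hbp : 0 < b := Real.sqrt_pos.mpr hsv
  have ha2 : a ^ 2 = ∑ i, u i ^ 2 := Real.sq_sqrt hsu.le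
  have hb2 : b ^ 2 = ∑ i, v i ^ 2 := Real.sq_sqrt hsv.le
  set u' : Fin n → ℝ := fun i => a⁻¹ * u i with hu'
  set v' : Fin n → ℝ := fun i => b⁻¹ * v i with hv'
  have hu's : IsSparse k u' := by
    unfold IsSparse at *
    refine le_trans (le_of_eq (congrArg Finset.card ?_)) hu
    apply Finset.filter_congr
    intro i _
    simp [hu', hap.ne', mul_ne_zero_iff]
  have hv's : IsSparse k v' := by
    unfold IsSparse at *
    refine le_trans (le_of_eq (congrArg Finset.card ?_)) hv
    apply Finset.filter_congr
    intro i _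
    simp [hv', hbp.ne', mul_ne_zero_iff]
  have hdisj' : ∀ i, u' i = 0 ∨ v' i = 0 := by
    intro i
    rcases hdisj i with h | h
    · left; simp [hu', h]
    · right; simp [hv', h]
  have hnu' : ∑ i, u' i ^ 2 = 1 := by
    simp only [hu', mul_pow, ← Finset.mul_sum]
    rw [← ha2]
    field_simp
  have hnv' : ∑ i, v' i ^ 2 = 1 := by
    simp only [hv', mul_pow, ← Finset.mul_sum]
    rw [← hb2]
    field_simp
  have key := key_unit A δ hRIP u' v' hu's hv's hdisj' hnu' hnv'
  have hmv : ∀ j, A.mulVec u j = a * A.mulVec u' j := by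
    intro j
    simp only [Matrix.mulVec, dotProduct, hu', Finset.mul_sum]
    apply Finset.sum_congr rfl
    intro i _
    field_simp
  have hmv' : ∀ j, A.mulVec v j = b * A.mulVec v' j := by
    intro j
    simp only [Matrix.mulVec, dotProduct, hv', Finset.mul_sum]
    apply Finset.sum_congr rfl
    intro i _
    field_simp
  have heq : ∑ j, A.mulVec u j * A.mulVec v j
      = a * b * ∑ j, A.mulVec u' j * A.mulVec v' j := by
    rw [Finset.mul_sum]
    apply Finset.sum_congr rfl
    intro j _
    rw [hmv j, hmv' j]; ring
  rw [heq, abs_mul, abs_of_pos (mul_pos hap hbp)]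
  calc a * b * |∑ j, A.mulVec u' j * A.mulVec v' j| ≤ a * b * δ := by
        exact mul_le_mul_of_nonneg_left key (mul_pos hap hbp).le
    _ = δ * a * b := by ring
end

section
/- For any vector h ∈ R^n and index set I with |I| ≤ k, if J denotes the indices of the k largest-magnitude entries of h outside I, then ‖h restricted to (I ∪ J)^c‖₂ ≤ ‖h restricted to I^c‖₁ / √k. -/
open Finset

/-- For `h ∈ ℝⁿ` and an index set `I` with `|I| ≤ k`, if `J` is the set of the
`k` largest-magnitude entries of `h` outside `I`, then
`‖h_{(I∪J)ᶜ}‖₂ ≤ ‖h_{Iᶜ}‖₁ / √k`. -/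
theorem stmt_10 (n k : ℕ) (hk : 0 < k) (h : Fin n → ℝ)
    (I J : Finset (Fin n)) (hI : I.card ≤ k)
    (hJsub : J ⊆ Iᶜ) (hJcard : J.card = min k Iᶜ.card)
    (hJmax : ∀ j ∈ J, ∀ i ∈ Iᶜ \ J, |h i| ≤ |h j|) :
    Real.sqrt (∑ i ∈ (I ∪ J)ᶜ, h i ^ 2) ≤
      (∑ i ∈ Iᶜ, |h i|) / Real.sqrt k := by
  set S := ∑ i ∈ Iᶜ, |h i| with hSdef
  have hS : 0 ≤ S := Finset.sum_nonneg fun i _ => abs_nonneg _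
  have hkR : (0:ℝ) < k := by exact_mod_cast hk
  have hcompl : (I ∪ J)ᶜ = Iᶜ \ J := by
    ext i; simp [Finset.mem_sdiff, and_comm]
  have key : ∑ i ∈ (I ∪ J)ᶜ, h i ^ 2 ≤ S ^ 2 / k := by
    rw [hcompl]
    rcases lt_or_ge Iᶜ.card k with hc | hc
    · have hJeq : J = Iᶜ := Finset.eq_of_subset_of_card_le hJsub
        (by rw [hJcard, min_eq_right hc.le])
      rw [hJeq, Finset.sdiff_self, Finset.sum_empty]
      positivity
    · have hJk : J.card = k := by rw [hJcard, min_eq_left hc]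
      have hJsum : ∑ j ∈ J, |h j| ≤ S :=
        Finset.sum_le_sum_of_subset_of_nonneg hJsub fun i _ _ => abs_nonneg _
      have hbound : ∀ i ∈ Iᶜ \ J, |h i| ≤ S / k := by
        intro i hi
        rw [le_div_iff₀ hkR]
        calc |h i| * k = ∑ _j ∈ J, |h i| := by
              rw [Finset.sum_const, hJk, nsmul_eq_mul, mul_comm]
          _ ≤ ∑ j ∈ J, |h j| := Finset.sum_le_sum fun j hj => hJmax j hj i hi
          _ ≤ S := hJsum
      calc ∑ i ∈ Iᶜ \ J, h i ^ 2 = ∑ i ∈ Iᶜ \ J, |h i| * |h i| := by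
            refine Finset.sum_congr rfl fun i _ => ?_
            rw [← abs_mul, abs_of_nonneg (mul_self_nonneg _), sq]
        _ ≤ ∑ i ∈ Iᶜ \ J, (S / k) * |h i| := by
            refine Finset.sum_le_sum fun i hi => ?_
            exact mul_le_mul_of_nonneg_right (hbound i hi) (abs_nonneg _)
        _ = (S / k) * ∑ i ∈ Iᶜ \ J, |h i| := by rw [Finset.mul_sum]
        _ ≤ (S / k) * S := by
            refine mul_le_mul_of_nonneg_left ?_ (by positivity)
            exact Finset.sum_le_sum_of_subset_of_nonneg (Finset.sdiff_subset)
              fun i _ _ => abs_nonneg _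
        _ = S ^ 2 / k := by ring
  calc Real.sqrt (∑ i ∈ (I ∪ J)ᶜ, h i ^ 2) ≤ Real.sqrt (S ^ 2 / k) :=
        Real.sqrt_le_sqrt key
    _ = S / Real.sqrt k := by
        rw [Real.sqrt_div (sq_nonneg S), Real.sqrt_sq hS]
end

section
/- Theorem (average reconstruction error bound): Let x* ∈ R^{P×T} be a movie, and suppose the sensing matrices A^(t) are uniformly RIP of order 2k with constant δ_{2k} < (4T)^{-1}. Given measurements y^(t) = A^(t)x*^(t) + z^(t) with ‖z^(t)‖₂ ≤ ε, let x̂ minimize ‖x^(0)‖₁ + ‖∇_t x‖₁ subject to ‖A^(t)x^(t) - y^(t)‖₂ ≤ ε for all t. Then for any pixel index set I with |I| ≤ k and Ī its per-frame repetition, (1/T) Σ_{t=0}^{T-1} ‖x*^(t) - x̂^(t)‖₂ ≤ C(‖x*^(0)_{I^c}‖₁ + ‖∇_t x*_{Ī^c}‖₁)/√k + C'·T·ε, where C, C' depend only on δ_{2k} and T·δ_{2k}. -/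
open Finset

/-- Forward time difference of a movie: `(∇ₜ x)^(t) = x^(t+1) - x^(t)`. -/
def gradT {P T : ℕ} (x : Fin T → Fin P → ℝ) (t : Fin (T - 1)) (p : Fin P) : ℝ :=
  x ⟨t.1 + 1, by have := t.2; omega⟩ p - x ⟨t.1, by have := t.2; omega⟩ p

/-- The objective `F(x) = ‖x^(0)‖₁ + ‖∇ₜ x‖₁`. -/
def Fobj {P T : ℕ} [NeZero T] (x : Fin T → Fin P → ℝ) : ℝ :=
  (∑ p, |x 0 p|) + ∑ t : Fin (T - 1), ∑ p, |gradT x t p|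

/-- Feasibility: `‖A^(t) x^(t) - y^(t)‖₂ ≤ ε` for all `t`. -/
def Feasible {P M T : ℕ} (A : Fin T → Matrix (Fin M) (Fin P) ℝ)
    (y : Fin T → Fin M → ℝ) (ε : ℝ) (x : Fin T → Fin P → ℝ) : Prop :=
  ∀ t, Real.sqrt (∑ j, ((A t).mulVec (x t) j - y t j) ^ 2) ≤ ε

/-!
Frame by frame, the RIP argument of Candès bounds the error `g = x* - x̂` on `I` together with the
`k` largest entries of `g` off `I` by `ε` and `‖g_{Iᶜ}‖₁ / √k`; the `ℓ²`-norm of the rest is at most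
`‖g_{Iᶜ}‖₁ / √k`. Optimality of `x̂` gives a cone constraint for the pixel-wise objective
`|x⁽⁰⁾_p| + ∑ₜ |(∇ₜ x)_p|`, and telescoping in time turns it into
`‖g⁽ᵗ⁾_{Iᶜ}‖₁ ≤ 2 √k ∑ₛ ‖g⁽ˢ⁾_I‖₂ + 2 (‖x*⁽⁰⁾_{Iᶜ}‖₁ + ‖∇ₜ x*_{Īᶜ}‖₁)` for every frame `t`.
Feeding this into the frame bounds couples all `T` frames; the resulting linear system closes
because `2 √2 δ T / (1 - δ) < 1`, which is where `δ < 1 / (4T)` is used.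
-/

open Matrix

lemma sqrt_add_sqrt_le {a b : ℝ} (ha : 0 ≤ a) (hb : 0 ≤ b) : √a + √b ≤ √2 * √(a + b) := by
  rw [← Real.sqrt_mul zero_le_two, Real.le_sqrt (by positivity) (by positivity)]
  nlinarith [sq_nonneg (√a - √b), Real.sq_sqrt ha, Real.sq_sqrt hb]

lemma sqrt_add_le_add_sqrt {a b : ℝ} (ha : 0 ≤ a) (hb : 0 ≤ b) : √(a + b) ≤ √a + √b := by
  rw [Real.sqrt_le_left (by positivity)]
  nlinarith [Real.sqrt_nonneg a, Real.sqrt_nonneg b, Real.sq_sqrt ha, Real.sq_sqrt hb]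

lemma abs_le_abs_add_sum_abs_sub (f : ℕ → ℝ) (m : ℕ) :
    |f m| ≤ |f 0| + ∑ i ∈ range m, |f (i + 1) - f i| :=
  calc |f m| = |f 0 + ∑ i ∈ range m, (f (i + 1) - f i)| := by rw [sum_range_sub, add_sub_cancel]
    _ ≤ |f 0| + ∑ i ∈ range m, |f (i + 1) - f i| :=
      (abs_add_le _ _).trans (by gcongr; exact abs_sum_le_sum_abs _ _)

lemma sum_abs_le_sqrt_card_mul {ι : Type*} (S : Finset ι) (v : ι → ℝ) :
    ∑ p ∈ S, |v p| ≤ √(#S : ℝ) * √(∑ p ∈ S, v p ^ 2) := by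
  rw [← Real.sqrt_mul (Nat.cast_nonneg _)]
  have := sq_sum_le_card_mul_sum_sq (s := S) (f := fun p => |v p|)
  simp only [sq_abs] at this
  exact Real.le_sqrt_of_sq_le this

/-- The cone constraint of `ℓ¹`-minimisation, with `a`, `b`, `d` the pointwise costs of the truth,
the minimiser and the error. -/
lemma sum_compl_le_of_le_add {ι : Type*} [Fintype ι] [DecidableEq ι] (S : Finset ι)
    {a b d : ι → ℝ} (had : ∀ p, a p ≤ d p + b p) (hda : ∀ p, d p ≤ a p + b p)
    (hba : ∑ p, b p ≤ ∑ p, a p) :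
    ∑ p ∈ Sᶜ, d p ≤ ∑ p ∈ S, d p + 2 * ∑ p ∈ Sᶜ, a p := by
  have h₁ := sum_le_sum fun p (_ : p ∈ Sᶜ) => hda p
  have h₂ := sum_le_sum fun p (_ : p ∈ S) => had p
  rw [sum_add_distrib] at h₁ h₂
  rw [← sum_add_sum_compl S a, ← sum_add_sum_compl S b] at hba
  linarith

lemma sqrt_sum_sq_sub_le {ι : Type*} [Fintype ι] (u v : ι → ℝ) :
    √(∑ i, (u i - v i) ^ 2) ≤ √(∑ i, u i ^ 2) + √(∑ i, v i ^ 2) := by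
  simpa [EuclideanSpace.norm_eq, sq_abs] using norm_sub_le (WithLp.toLp 2 u) (WithLp.toLp 2 v)

section TopEntries

variable {ι : Type*}

/-- Each dominated entry is at most the average of the `k` dominating ones. -/
lemma sqrt_sum_sq_le_of_forall_abs_le {w : ι → ℝ} {k : ℕ} {J K : Finset ι} (hK : #K = k)
    (hJ : #J ≤ k) (hdom : ∀ p ∈ J, ∀ q ∈ K, |w p| ≤ |w q|) :
    √(∑ p ∈ J, w p ^ 2) ≤ (∑ q ∈ K, |w q|) / √k := by
  rcases Nat.eq_zero_or_pos k with rfl | hk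
  · simp [card_eq_zero.1 (Nat.le_zero.1 hJ)]
  have hk' : (0 : ℝ) < k := by exact_mod_cast hk
  set m := (∑ q ∈ K, |w q|) / k
  have hm : ∀ p ∈ J, |w p| ≤ m := fun p hp => by
    rw [le_div_iff₀ hk', mul_comm, ← hK, ← nsmul_eq_mul, ← sum_const]
    exact sum_le_sum (hdom p hp)
  have hm0 : 0 ≤ m := by positivity
  calc √(∑ p ∈ J, w p ^ 2) ≤ √(k * m ^ 2) := by
        gcongr
        calc ∑ p ∈ J, w p ^ 2 ≤ ∑ _p ∈ J, m ^ 2 := sum_le_sum fun p hp => by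
              rw [← sq_abs]; exact pow_le_pow_left₀ (abs_nonneg _) (hm p hp) 2
          _ ≤ k * m ^ 2 := by rw [sum_const, nsmul_eq_mul]; gcongr
    _ = (∑ q ∈ K, |w q|) / √k := by
        rw [Real.sqrt_mul hk'.le, Real.sqrt_sq hm0, eq_div_iff (by positivity), mul_right_comm,
          Real.mul_self_sqrt hk'.le, mul_div_cancel₀ _ hk'.ne']

variable [DecidableEq ι]

def IsTopEntries (w : ι → ℝ) (k : ℕ) (S K : Finset ι) : Prop :=
  K ⊆ S ∧ #K = min k #S ∧ ∀ p ∈ S \ K, ∀ q ∈ K, |w p| ≤ |w q|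

lemma exists_isTopEntries (w : ι → ℝ) (k : ℕ) (S : Finset ι) : ∃ K, IsTopEntries w k S K := by
  induction k generalizing S with
  | zero => exact ⟨∅, empty_subset _, by simp, by simp⟩
  | succ k ih =>
    rcases S.eq_empty_or_nonempty with rfl | hS
    · exact ⟨∅, empty_subset _, by simp, by simp⟩
    obtain ⟨q₀, hq₀, hmax⟩ := S.exists_max_image (fun p => |w p|) hS
    obtain ⟨K, hKS, hKcard, hKtop⟩ := ih (S.erase q₀)
    have hq₀K : q₀ ∉ K := fun h => (mem_erase.1 (hKS h)).1 rfl
    refine ⟨insert q₀ K, insert_subset hq₀ ((hKS.trans (erase_subset _ _))), ?_, ?_⟩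
    · rw [card_insert_of_notMem hq₀K, hKcard, card_erase_of_mem hq₀]
      have := hS.card_pos
      omega
    · intro p hp q hq
      obtain ⟨hpS, hpK⟩ := mem_sdiff.1 hp
      rcases mem_insert.1 hq with rfl | hq
      · exact hmax p hpS
      · refine hKtop p (mem_sdiff.2 ⟨mem_erase.2 ⟨?_, hpS⟩, ?_⟩) q hq
        · rintro rfl; exact hpK (mem_insert_self _ _)
        · exact fun h => hpK (mem_insert_of_mem h)

lemma IsTopEntries.card_le {w : ι → ℝ} {k : ℕ} {S K : Finset ι} (hK : IsTopEntries w k S K) :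
    #K ≤ k :=
  hK.2.1 ▸ min_le_left _ _

lemma IsTopEntries.sdiff_eq_empty_of_card_lt {w : ι → ℝ} {k : ℕ} {S K : Finset ι}
    (hK : IsTopEntries w k S K) (hlt : #K < k) : S \ K = ∅ := by
  rw [sdiff_eq_empty_iff_subset]
  exact (eq_of_subset_of_card_le hK.1 (by have := hK.2.1; omega)).symm.subset

/-- Peel off the `k` largest entries of `S \ K` as a block, whose `ℓ²`-norm is at most
`‖w_K‖₁ / √k`, and induct on the rest. -/
lemma IsTopEntries.le_of_subadditive {w : ι → ℝ} {k : ℕ} (hk : 0 < k) {Φ : Finset ι → ℝ}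
    {c : ℝ} (hc : 0 ≤ c) {S₀ : Finset ι}
    (hsplit : ∀ S K, K ⊆ S → Φ S ≤ Φ K + Φ (S \ K))
    (hblock : ∀ K ⊆ S₀, #K ≤ k → Φ K ≤ c * √(∑ p ∈ K, w p ^ 2))
    {S K : Finset ι} (hS : S \ K ⊆ S₀) (hK : IsTopEntries w k S K) :
    Φ (S \ K) ≤ c * (∑ p ∈ S, |w p|) / √k := by
  induction hn : #S using Nat.strong_induction_on generalizing S K with
  | _ n ih =>
  have hbound : 0 ≤ c * (∑ p ∈ S, |w p|) / √k := by positivity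
  rcases hK.card_le.lt_or_eq with hlt | hKk
  · rw [hK.sdiff_eq_empty_of_card_lt hlt]
    simpa using (hblock ∅ (empty_subset _) (Nat.zero_le _)).trans (by simpa using hbound)
  obtain ⟨K', hK'⟩ := exists_isTopEntries w k (S \ K)
  have hcard : #(S \ K) < n := by
    rw [card_sdiff_of_subset hK.1, ← hn]
    have : #K ≤ #S := card_le_card hK.1
    omega
  calc Φ (S \ K) ≤ Φ K' + Φ ((S \ K) \ K') := hsplit _ _ hK'.1
    _ ≤ c * ((∑ q ∈ K, |w q|) / √k) + c * (∑ p ∈ S \ K, |w p|) / √k := by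
        gcongr
        · exact (hblock K' (hK'.1.trans hS) hK'.card_le).trans
            (mul_le_mul_of_nonneg_left (sqrt_sum_sq_le_of_forall_abs_le hKk
              hK'.card_le fun p hp => hK.2.2 p (hK'.1 hp)) hc)
        · exact ih _ hcard (sdiff_subset.trans hS) hK' rfl
    _ = c * (∑ p ∈ S, |w p|) / √k := by
        rw [← sum_sdiff hK.1]; ring

lemma sqrt_sum_sq_sdiff_le_of_isTopEntries {w : ι → ℝ} {k : ℕ}
    (hk : 0 < k) {S K : Finset ι} (hK : IsTopEntries w k S K) :
    √(∑ p ∈ S \ K, w p ^ 2) ≤ (∑ p ∈ S, |w p|) / √k := by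
  simpa using hK.le_of_subadditive (Φ := fun S => √(∑ p ∈ S, w p ^ 2)) hk zero_le_one
    (fun S K hKS => by
      rw [← sum_sdiff hKS, add_comm]
      exact sqrt_add_le_add_sqrt
        (sum_nonneg fun p (_ : p ∈ K) => sq_nonneg (w p))
        (sum_nonneg fun p (_ : p ∈ S \ K) => sq_nonneg (w p)))
    (fun K _ _ => by simp) (subset_refl _)

end TopEntries

section Sparse

variable {n : ℕ}

lemma isSparse_of_support_subset {s : ℕ} {S : Finset (Fin n)} (hS : #S ≤ s) {v : Fin n → ℝ}
    (hv : ∀ p ∉ S, v p = 0) : IsSparse s v :=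
  (card_le_card fun p hp => by_contra fun hpS => (mem_filter.1 hp).2 (hv p hpS) :
    #{p | v p ≠ 0} ≤ #S).trans hS

def SatisfiesRIP {M : ℕ} (B : Matrix (Fin M) (Fin n) ℝ) (s : ℕ) (δ : ℝ) : Prop :=
  ∀ v : Fin n → ℝ, IsSparse s v →
    (1 - δ) * ∑ p, v p ^ 2 ≤ ∑ j, (B *ᵥ v) j ^ 2 ∧ ∑ j, (B *ᵥ v) j ^ 2 ≤ (1 + δ) * ∑ p, v p ^ 2

lemma sum_sq_eq_dotProduct {ι : Type*} [Fintype ι] (v : ι → ℝ) : ∑ i, v i ^ 2 = v ⬝ᵥ v := by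
  simp only [dotProduct, sq]

variable {M s : ℕ} {B : Matrix (Fin M) (Fin n) ℝ} {δ : ℝ}

lemma SatisfiesRIP.two_mul_dotProduct_le (hB : SatisfiesRIP B s δ) {u v : Fin n → ℝ}
    (huv : u ⬝ᵥ v = 0) (hadd : IsSparse s (u + v)) (hsub : IsSparse s (u - v)) :
    2 * ((B *ᵥ u) ⬝ᵥ (B *ᵥ v)) ≤ δ * (u ⬝ᵥ u + v ⬝ᵥ v) := by
  have hplus := (hB _ hadd).2
  have hminus := (hB _ hsub).1
  simp only [sum_sq_eq_dotProduct, mulVec_add, mulVec_sub, add_dotProduct, dotProduct_add,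
    sub_dotProduct, dotProduct_sub, dotProduct_comm v u, dotProduct_comm (B *ᵥ v) (B *ᵥ u),
    huv] at hplus hminus
  linarith

/-- Restricted orthogonality. By polarization `2 c ⟪B u, B v⟫ ≤ δ (c² ‖u‖² + ‖v‖²)` for every `c`,
and the discriminant of this quadratic in `c` gives the bound. -/
lemma SatisfiesRIP.abs_dotProduct_le (hB : SatisfiesRIP B s δ) (hδ : 0 ≤ δ) {J K : Finset (Fin n)}
    (hJK : Disjoint J K) (hcard : #J + #K ≤ s) {u v : Fin n → ℝ} (hu : ∀ p ∉ J, u p = 0)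
    (hv : ∀ p ∉ K, v p = 0) :
    |(B *ᵥ u) ⬝ᵥ (B *ᵥ v)| ≤ δ * √(u ⬝ᵥ u) * √(v ⬝ᵥ v) := by
  have hsupp : ∀ c d : ℝ, ∀ p ∉ J ∪ K, (c • u + d • v) p = 0 := fun c d p hp => by
    simp [hu p (fun h => hp (mem_union_left _ h)), hv p (fun h => hp (mem_union_right _ h))]
  have horth : ∀ c d : ℝ, (c • u) ⬝ᵥ (d • v) = 0 := fun c d => by
    simp only [smul_dotProduct, dotProduct_smul]
    rw [show u ⬝ᵥ v = 0 from sum_eq_zero fun p _ => by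
      by_cases hp : p ∈ J
      · simp [hv p (disjoint_left.1 hJK hp)]
      · simp [hu p hp]]
    simp
  have hquad : ∀ x : ℝ, 0 ≤ δ * (u ⬝ᵥ u) * (x * x) + (-2 * ((B *ᵥ u) ⬝ᵥ (B *ᵥ v))) * x
      + δ * (v ⬝ᵥ v) := fun x => by
    have := hB.two_mul_dotProduct_le (horth x 1)
      (isSparse_of_support_subset ((card_union_le J K).trans hcard) (hsupp x 1))
      (isSparse_of_support_subset ((card_union_le J K).trans hcard)
        (by simpa [sub_eq_add_neg] using hsupp x (-1)))
    simp only [mulVec_smul, smul_dotProduct, dotProduct_smul, smul_eq_mul, one_smul] at this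
    nlinarith
  have hdisc := discrim_le_zero hquad
  rw [discrim] at hdisc
  have hU : 0 ≤ u ⬝ᵥ u := sum_nonneg fun p _ => mul_self_nonneg (u p)
  have hV : 0 ≤ v ⬝ᵥ v := sum_nonneg fun p _ => mul_self_nonneg (v p)
  calc |(B *ᵥ u) ⬝ᵥ (B *ᵥ v)| ≤ √((δ * √(u ⬝ᵥ u) * √(v ⬝ᵥ v)) ^ 2) := by
        apply Real.abs_le_sqrt
        rw [mul_pow, mul_pow, Real.sq_sqrt hU, Real.sq_sqrt hV]
        nlinarith
    _ = δ * √(u ⬝ᵥ u) * √(v ⬝ᵥ v) := Real.sqrt_sq (by positivity)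

end Sparse

section Frame

variable {n M k : ℕ} {B : Matrix (Fin M) (Fin n) ℝ} {δ : ℝ}

lemma indicator_dotProduct_self (S : Finset (Fin n)) (g : Fin n → ℝ) :
    (S : Set (Fin n)).indicator g ⬝ᵥ (S : Set (Fin n)).indicator g = ∑ p ∈ S, g p ^ 2 := by
  simp [dotProduct, Set.indicator_apply, ← sq, ite_pow, sum_ite_mem]

lemma indicator_eq_zero_of_notMem {S : Finset (Fin n)} (g : Fin n → ℝ) :
    ∀ p ∉ S, (S : Set (Fin n)).indicator g p = 0 :=
  fun _ hp => Set.indicator_of_notMem (by simpa using hp) g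

lemma indicator_union {S K : Finset (Fin n)} (h : Disjoint S K) (g : Fin n → ℝ) :
    ((S ∪ K : Finset (Fin n)) : Set (Fin n)).indicator g =
      (S : Set (Fin n)).indicator g + (K : Set (Fin n)).indicator g := by
  rw [coe_union, Set.indicator_union_of_disjoint (disjoint_coe.2 h)]; rfl

lemma SatisfiesRIP.abs_dotProduct_indicator_le {s : ℕ} (hB : SatisfiesRIP B s δ) (hδ : 0 ≤ δ)
    {J K : Finset (Fin n)} (hJK : Disjoint J K) (hcard : #J + #K ≤ s) (g h : Fin n → ℝ) :
    |(B *ᵥ (J : Set (Fin n)).indicator g) ⬝ᵥ (B *ᵥ (K : Set (Fin n)).indicator h)| ≤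
      δ * √(∑ p ∈ J, g p ^ 2) * √(∑ p ∈ K, h p ^ 2) := by
  simpa only [indicator_dotProduct_self] using hB.abs_dotProduct_le hδ hJK hcard
    (indicator_eq_zero_of_notMem g) (indicator_eq_zero_of_notMem h)

lemma SatisfiesRIP.abs_dotProduct_indicator_union_le (hB : SatisfiesRIP B (2 * k) δ)
    (hδ : 0 ≤ δ) {I K L : Finset (Fin n)} (hIK : Disjoint I K) (hL : Disjoint (I ∪ K) L)
    (hI : #I ≤ k) (hK : #K ≤ k) (hLk : #L ≤ k) (g : Fin n → ℝ) :
    |(B *ᵥ ((I ∪ K : Finset (Fin n)) : Set (Fin n)).indicator g) ⬝ᵥ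
        (B *ᵥ (L : Set (Fin n)).indicator g)| ≤
      √2 * δ * √(∑ p ∈ I ∪ K, g p ^ 2) * √(∑ p ∈ L, g p ^ 2) := by
  have hIL := hB.abs_dotProduct_indicator_le hδ (disjoint_union_left.1 hL).1 (by omega) g g
  have hKL := hB.abs_dotProduct_indicator_le hδ (disjoint_union_left.1 hL).2 (by omega) g g
  have hsqrt := sqrt_add_sqrt_le (sum_nonneg fun p (_ : p ∈ I) => sq_nonneg (g p))
    (sum_nonneg fun p (_ : p ∈ K) => sq_nonneg (g p))
  rw [← sum_union hIK] at hsqrt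
  rw [indicator_union hIK, mulVec_add, add_dotProduct]
  calc _ ≤ δ * (√(∑ p ∈ I, g p ^ 2) + √(∑ p ∈ K, g p ^ 2)) * √(∑ p ∈ L, g p ^ 2) := by
        linarith [abs_add_le ((B *ᵥ (I : Set (Fin n)).indicator g) ⬝ᵥ
          (B *ᵥ (L : Set (Fin n)).indicator g)) ((B *ᵥ (K : Set (Fin n)).indicator g) ⬝ᵥ
          (B *ᵥ (L : Set (Fin n)).indicator g))]
    _ ≤ _ := (mul_le_mul_of_nonneg_right (mul_le_mul_of_nonneg_left hsqrt hδ)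
        (Real.sqrt_nonneg _)).trans_eq (by ring)

lemma SatisfiesRIP.abs_dotProduct_head_tail_le (hB : SatisfiesRIP B (2 * k) δ) (hk : 0 < k)
    (hδ : 0 ≤ δ) {I K : Finset (Fin n)} (hI : #I ≤ k) (g : Fin n → ℝ) (hK : IsTopEntries g k Iᶜ K) :
    |(B *ᵥ ((I ∪ K : Finset (Fin n)) : Set (Fin n)).indicator g) ⬝ᵥ
        (B *ᵥ (((I ∪ K)ᶜ : Finset (Fin n)) : Set (Fin n)).indicator g)| ≤
      √2 * δ * √(∑ p ∈ I ∪ K, g p ^ 2) * (∑ p ∈ Iᶜ, |g p|) / √k := by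
  have hIK : Disjoint I K := (subset_compl_iff_disjoint_right.1 hK.1).symm
  have hcompl : Iᶜ \ K = (I ∪ K)ᶜ := by rw [compl_union, sdiff_eq_inter_compl]
  rw [← hcompl]
  refine hK.le_of_subadditive hk (by positivity) (fun S L hLS => ?_)
    (fun L hL hLk => hB.abs_dotProduct_indicator_union_le hδ hIK
      (disjoint_right.2 fun p hp => mem_compl.1 (hcompl ▸ hL hp)) hI hK.card_le hLk g) subset_rfl
  have hsplit := indicator_union (disjoint_sdiff : Disjoint L (S \ L)) g
  rw [union_sdiff_of_subset hLS] at hsplit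
  rw [hsplit, mulVec_add, dotProduct_add]
  exact abs_add_le _ _

/-- With `J = I ∪ K`, `(1 - δ) ‖g_J‖² ≤ ⟪B g_J, B g⟫ - ⟪B g_J, B g_{Jᶜ}⟫`: the first term is
bounded by Cauchy–Schwarz, the second by restricted orthogonality over the blocks of `Jᶜ`. -/
lemma SatisfiesRIP.head_bound (hB : SatisfiesRIP B (2 * k) δ) (hk : 0 < k) (hδ : 0 ≤ δ)
    {I K : Finset (Fin n)} (hI : #I ≤ k) (g : Fin n → ℝ) (hK : IsTopEntries g k Iᶜ K) :
    (1 - δ) * √(∑ p ∈ I ∪ K, g p ^ 2) ≤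
      √(1 + δ) * √(∑ j, (B *ᵥ g) j ^ 2) + √2 * δ * ((∑ p ∈ Iᶜ, |g p|) / √k) := by
  have htail := hB.abs_dotProduct_head_tail_le hk hδ hI g hK
  set J := I ∪ K
  set gJ := (J : Set (Fin n)).indicator g
  set gJc := ((Jᶜ : Finset (Fin n)) : Set (Fin n)).indicator g
  set h := √(∑ p ∈ J, g p ^ 2)
  have hh : 0 ≤ h := Real.sqrt_nonneg _
  have hJsparse : IsSparse (2 * k) gJ :=
    isSparse_of_support_subset ((card_union_le I K).trans (by linarith [hK.card_le]))
      (indicator_eq_zero_of_notMem g)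
  obtain ⟨hlow, hupp⟩ := hB gJ hJsparse
  rw [sum_sq_eq_dotProduct gJ, indicator_dotProduct_self,
    ← Real.sq_sqrt (sum_nonneg fun p (_ : p ∈ J) => sq_nonneg (g p))] at hlow hupp
  have hBgJ : √(∑ j, (B *ᵥ gJ) j ^ 2) ≤ √(1 + δ) * h := by
    rw [← Real.sqrt_sq hh, ← Real.sqrt_mul (by linarith)]
    exact Real.sqrt_le_sqrt hupp
  have hBg : B *ᵥ g = B *ᵥ gJ + B *ᵥ gJc := by
    rw [← mulVec_add, show gJ + gJc = g by
      simp only [gJ, gJc, coe_compl, Set.indicator_self_add_compl]]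
  have key : (1 - δ) * h * h ≤
      h * (√(1 + δ) * √(∑ j, (B *ᵥ g) j ^ 2) + √2 * δ * ((∑ p ∈ Iᶜ, |g p|) / √k)) :=
    calc (1 - δ) * h * h ≤ ∑ j, (B *ᵥ gJ) j ^ 2 := by linarith
      _ = (B *ᵥ gJ) ⬝ᵥ (B *ᵥ g) - (B *ᵥ gJ) ⬝ᵥ (B *ᵥ gJc) := by
        rw [sum_sq_eq_dotProduct, hBg, dotProduct_add]; ring
      _ ≤ √(1 + δ) * h * √(∑ j, (B *ᵥ g) j ^ 2) + √2 * δ * h * (∑ p ∈ Iᶜ, |g p|) / √k := by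
        have := Real.sum_mul_le_sqrt_mul_sqrt univ (B *ᵥ gJ) (B *ᵥ g)
        have := mul_le_mul_of_nonneg_right hBgJ (Real.sqrt_nonneg (∑ j, (B *ᵥ g) j ^ 2))
        have := neg_abs_le ((B *ᵥ gJ) ⬝ᵥ (B *ᵥ gJc))
        simp only [dotProduct] at *
        linarith
      _ = _ := by ring
  rcases hh.eq_or_lt with h0 | hpos
  · rw [← h0, mul_zero]; positivity
  · exact le_of_mul_le_mul_left (by linarith) hpos

lemma SatisfiesRIP.frame_bound (hB : SatisfiesRIP B (2 * k) δ) (hk : 0 < k) (hδ0 : 0 ≤ δ)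
    (hδ1 : δ < 1) {I : Finset (Fin n)} (hI : #I ≤ k) {g : Fin n → ℝ} {η : ℝ}
    (hg : √(∑ j, (B *ᵥ g) j ^ 2) ≤ η) :
    √(∑ p ∈ I, g p ^ 2) ≤ √(1 + δ) / (1 - δ) * η + √2 * δ / (1 - δ) * ((∑ p ∈ Iᶜ, |g p|) / √k) ∧
      √(∑ p, g p ^ 2) ≤
        √(1 + δ) / (1 - δ) * η + (√2 * δ / (1 - δ) + 1) * ((∑ p ∈ Iᶜ, |g p|) / √k) := by
  obtain ⟨K, hK⟩ := exists_isTopEntries g k Iᶜ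
  set w := (∑ p ∈ Iᶜ, |g p|) / √k
  have hρ : √(∑ p ∈ I ∪ K, g p ^ 2) ≤ √(1 + δ) / (1 - δ) * η + √2 * δ / (1 - δ) * w := by
    have := hB.head_bound hk hδ0 hI g hK
    rw [div_mul_eq_mul_div, div_mul_eq_mul_div, ← add_div, le_div_iff₀ (by linarith)]
    nlinarith [Real.sqrt_nonneg (1 + δ)]
  refine ⟨(Real.sqrt_le_sqrt (sum_le_sum_of_subset_of_nonneg subset_union_left
    fun p _ _ => sq_nonneg (g p))).trans hρ, ?_⟩
  have htail : √(∑ p ∈ (I ∪ K)ᶜ, g p ^ 2) ≤ w := by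
    rw [compl_union, ← sdiff_eq_inter_compl]
    exact sqrt_sum_sq_sdiff_le_of_isTopEntries hk hK
  calc √(∑ p, g p ^ 2) ≤ √(∑ p ∈ I ∪ K, g p ^ 2) + √(∑ p ∈ (I ∪ K)ᶜ, g p ^ 2) := by
        rw [← sum_add_sum_compl (I ∪ K)]
        exact sqrt_add_le_add_sqrt (sum_nonneg fun _ _ => sq_nonneg _)
          (sum_nonneg fun _ _ => sq_nonneg _)
    _ ≤ _ := by linarith

end Frame

section Movie

variable {P T : ℕ} [NeZero T]

def pixelTV (x : Fin T → Fin P → ℝ) (p : Fin P) : ℝ :=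
  |x 0 p| + ∑ s, |gradT x s p|

lemma sum_pixelTV (x : Fin T → Fin P → ℝ) (S : Finset (Fin P)) :
    ∑ p ∈ S, pixelTV x p = ∑ p ∈ S, |x 0 p| + ∑ s, ∑ p ∈ S, |gradT x s p| := by
  simp only [pixelTV, sum_add_distrib]
  rw [sum_comm]

lemma Fobj_eq_sum_pixelTV (x : Fin T → Fin P → ℝ) : Fobj x = ∑ p, pixelTV x p :=
  (sum_pixelTV x univ).symm

lemma pixelTV_add_le (x y : Fin T → Fin P → ℝ) (p : Fin P) :
    pixelTV (x + y) p ≤ pixelTV x p + pixelTV y p := by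
  have hgrad : ∀ s, gradT (x + y) s p = gradT x s p + gradT y s p := fun s => by
    simp only [gradT, Pi.add_apply]; ring
  simp only [pixelTV, hgrad, Pi.add_apply]
  have := sum_le_sum fun s (_ : s ∈ univ) => abs_add_le (gradT x s p) (gradT y s p)
  rw [sum_add_distrib] at this
  linarith [abs_add_le (x 0 p) (y 0 p)]

lemma pixelTV_neg (x : Fin T → Fin P → ℝ) (p : Fin P) : pixelTV (-x) p = pixelTV x p := by
  have hgrad : ∀ s, gradT (-x) s p = -gradT x s p := fun s => by
    simp only [gradT, Pi.neg_apply]; ring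
  simp only [pixelTV, hgrad, Pi.neg_apply, abs_neg]

lemma abs_le_pixelTV (x : Fin T → Fin P → ℝ) (t : Fin T) (p : Fin P) : |x t p| ≤ pixelTV x p := by
  obtain ⟨n, rfl⟩ := Nat.exists_eq_add_one_of_ne_zero (NeZero.ne T)
  set f : ℕ → ℝ := fun i => if h : i < n + 1 then x ⟨i, h⟩ p else 0
  calc |x t p| = |f t| := by simp [f, Fin.is_le t]
    _ ≤ |f 0| + ∑ i ∈ range t, |f (i + 1) - f i| := abs_le_abs_add_sum_abs_sub f t
    _ ≤ |f 0| + ∑ i ∈ range n, |f (i + 1) - f i| := by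
        gcongr 1
        exact sum_le_sum_of_subset_of_nonneg (range_subset_range.2 (Fin.is_le t))
          fun _ _ _ => abs_nonneg _
    _ = pixelTV x p := by
        rw [pixelTV, ← Fin.sum_univ_eq_sum_range]
        simp [f, gradT]

lemma pixelTV_le_two_mul_sum (x : Fin T → Fin P → ℝ) (p : Fin P) :
    pixelTV x p ≤ 2 * ∑ t, |x t p| := by
  obtain ⟨n, rfl⟩ := Nat.exists_eq_add_one_of_ne_zero (NeZero.ne T)
  have hsucc := Fin.sum_univ_succ fun t => |x t p|
  have hcast := Fin.sum_univ_castSucc fun t => |x t p|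
  have hsub := sum_le_sum fun (s : Fin n) (_ : s ∈ univ) => abs_sub (x s.succ p) (x s.castSucc p)
  rw [sum_add_distrib] at hsub
  have := abs_nonneg (x (Fin.last n) p)
  change |x 0 p| + ∑ s : Fin n, |x s.succ p - x s.castSucc p| ≤ _
  linarith

lemma sum_compl_pixelTV_sub_le {xstar xhat : Fin T → Fin P → ℝ} (h : Fobj xhat ≤ Fobj xstar)
    (S : Finset (Fin P)) :
    ∑ p ∈ Sᶜ, pixelTV (xstar - xhat) p ≤
      ∑ p ∈ S, pixelTV (xstar - xhat) p + 2 * ∑ p ∈ Sᶜ, pixelTV xstar p := by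
  refine sum_compl_le_of_le_add S (b := pixelTV xhat) (fun p => ?_) (fun p => ?_)
    (by simpa only [Fobj_eq_sum_pixelTV] using h)
  · simpa using pixelTV_add_le (xstar - xhat) xhat p
  · simpa [sub_eq_add_neg, pixelTV_neg] using pixelTV_add_le xstar (-xhat) p

/-- Telescoping bounds every frame by the pixel-wise objective, to which the cone constraint
applies. -/
lemma sum_compl_abs_sub_le {xstar xhat : Fin T → Fin P → ℝ} (h : Fobj xhat ≤ Fobj xstar)
    {I : Finset (Fin P)} {k : ℕ} (hI : #I ≤ k) (t : Fin T) :
    ∑ p ∈ Iᶜ, |(xstar - xhat) t p| ≤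
      2 * √k * ∑ s, √(∑ p ∈ I, (xstar - xhat) s p ^ 2) + 2 * ∑ p ∈ Iᶜ, pixelTV xstar p := by
  set g := xstar - xhat
  calc ∑ p ∈ Iᶜ, |g t p| ≤ ∑ p ∈ Iᶜ, pixelTV g p := sum_le_sum fun p _ => abs_le_pixelTV g t p
    _ ≤ ∑ p ∈ I, pixelTV g p + 2 * ∑ p ∈ Iᶜ, pixelTV xstar p := sum_compl_pixelTV_sub_le h I
    _ ≤ ∑ p ∈ I, 2 * ∑ s, |g s p| + 2 * ∑ p ∈ Iᶜ, pixelTV xstar p := by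
        gcongr with p
        exact pixelTV_le_two_mul_sum g p
    _ = 2 * ∑ s, ∑ p ∈ I, |g s p| + 2 * ∑ p ∈ Iᶜ, pixelTV xstar p := by
        rw [← mul_sum, sum_comm]
    _ ≤ 2 * ∑ s, √k * √(∑ p ∈ I, g s p ^ 2) + 2 * ∑ p ∈ Iᶜ, pixelTV xstar p := by
        gcongr with s
        exact (sum_abs_le_sqrt_card_mul I (g s)).trans (by gcongr)
    _ = 2 * √k * ∑ s, √(∑ p ∈ I, g s p ^ 2) + 2 * ∑ p ∈ Iᶜ, pixelTV xstar p := by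
        rw [← mul_sum, mul_assoc]

end Movie

lemma feasible_of_noise {P M T : ℕ} {A : Fin T → Matrix (Fin M) (Fin P) ℝ}
    {xstar : Fin T → Fin P → ℝ} {zn y : Fin T → Fin M → ℝ} {ε : ℝ}
    (hy : ∀ t, y t = A t *ᵥ xstar t + zn t) (hz : ∀ t, √(∑ j, zn t j ^ 2) ≤ ε) :
    Feasible A y ε xstar := fun t => by
  simpa [hy t] using hz t

lemma Feasible.sqrt_sum_sq_mulVec_sub_le {P M T : ℕ} {A : Fin T → Matrix (Fin M) (Fin P) ℝ}
    {y : Fin T → Fin M → ℝ} {ε : ℝ} {x x' : Fin T → Fin P → ℝ} (hx : Feasible A y ε x)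
    (hx' : Feasible A y ε x') (t : Fin T) :
    √(∑ j, (A t *ᵥ (x - x') t) j ^ 2) ≤ 2 * ε := by
  have := sqrt_sum_sq_sub_le (fun j => (A t *ᵥ x t) j - y t j) (fun j => (A t *ᵥ x' t) j - y t j)
  simp only [sub_sub_sub_cancel_right] at this
  simp only [Pi.sub_apply, mulVec_sub]
  linarith [hx t, hx' t]

lemma mean_le_of_frame_bounds {T : ℕ} [NeZero T] {a n w : Fin T → ℝ} {α β η e : ℝ}
    (hβ : 0 ≤ β) (hγ : 2 * β * T < 1) (hαη : 0 ≤ α * η)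
    (ha : ∀ t, a t ≤ α * η + β * w t) (hn : ∀ t, n t ≤ α * η + (β + 1) * w t)
    (hw : ∀ t, w t ≤ 2 * ∑ s, a s + 2 * e) :
    1 / (T : ℝ) * ∑ t, n t ≤
      2 * (β + 1) / (1 - 2 * β * T) * e + (2 * (β + 1) / (1 - 2 * β * T) + 1) * α * T * η := by
  have hT : (1 : ℝ) ≤ T := Nat.one_le_cast.2 (Nat.pos_of_neZero T)
  set A := ∑ s, a s
  have hA : A ≤ T * (α * η + β * (2 * A + 2 * e)) :=
    calc A ≤ ∑ _t : Fin T, (α * η + β * (2 * A + 2 * e)) :=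
          sum_le_sum fun t _ => by linarith [ha t, mul_le_mul_of_nonneg_left (hw t) hβ]
      _ = _ := by simp [mul_add]
  have hN : ∑ t, n t ≤ T * (α * η + (β + 1) * (2 * A + 2 * e)) :=
    calc ∑ t, n t ≤ ∑ _t : Fin T, (α * η + (β + 1) * (2 * A + 2 * e)) :=
          sum_le_sum fun t _ => by
            linarith [hn t, mul_le_mul_of_nonneg_left (hw t) (by linarith : 0 ≤ β + 1)]
      _ = _ := by simp [mul_add]
  have hAe : A + e ≤ (T * (α * η) + e) / (1 - 2 * β * T) := by
    rw [le_div_iff₀ (by linarith)]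
    nlinarith
  calc 1 / (T : ℝ) * ∑ t, n t ≤ α * η + 2 * (β + 1) * (A + e) := by
        rw [one_div, inv_mul_le_iff₀ (by linarith)]
        linarith
    _ ≤ α * η + 2 * (β + 1) * ((T * (α * η) + e) / (1 - 2 * β * T)) := by gcongr
    _ = 2 * (β + 1) / (1 - 2 * β * T) * e + (2 * (β + 1) / (1 - 2 * β * T) + 1) * α * T * η
          - (T - 1) * (α * η) := by ring
    _ ≤ _ := by nlinarith

lemma two_mul_div_one_sub_mul_lt_one {T δ : ℝ} (hT : 1 ≤ T) (hδ0 : 0 < δ) (hδ : δ < (4 * T)⁻¹) :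
    δ < 1 ∧ 2 * (√2 * δ / (1 - δ)) * T < 1 := by
  have h4T : (0 : ℝ) < 4 * T := by positivity
  have hδT := mul_lt_mul_of_pos_right hδ h4T
  rw [inv_mul_cancel₀ h4T.ne'] at hδT
  have hδ1 : δ < 1 := by nlinarith
  refine ⟨hδ1, ?_⟩
  rw [show 2 * (√2 * δ / (1 - δ)) * T = 2 * √2 * (δ * T) / (1 - δ) by ring,
    div_lt_one (by linarith)]
  have hsqrt2 : √2 < 3 / 2 := (Real.sqrt_lt' (by norm_num)).2 (by norm_num)
  nlinarith [mul_lt_mul_of_pos_right hsqrt2 (by positivity : 0 < δ * T)]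

/-- Average reconstruction error bound: if the sensing matrices `A^(t)` are
uniformly RIP of order `2k` with constant `δ < (4T)⁻¹`, the measurements are
`y^(t) = A^(t)x*^(t) + z^(t)` with `‖z^(t)‖₂ ≤ ε`, and `x̂` minimizes
`‖x^(0)‖₁ + ‖∇ₜ x‖₁` over feasible movies, then for any pixel set `I` with
`|I| ≤ k`,
`(1/T)∑_t ‖x*^(t) - x̂^(t)‖₂ ≤ C(‖x*^(0)_{Iᶜ}‖₁ + ‖∇ₜ x*_{Īᶜ}‖₁)/√k + C'·T·ε`,
where the constants `C, C'` depend only on `δ` and `T·δ`. -/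
theorem stmt_14 (T k : ℕ) [NeZero T] (hk : 0 < k) (δ : ℝ)
    (hδ0 : 0 < δ) (hδ : δ < (4 * (T : ℝ))⁻¹) :
    ∃ C C' : ℝ, 0 < C ∧ 0 < C' ∧
      ∀ (P M : ℕ) (A : Fin T → Matrix (Fin M) (Fin P) ℝ)
        (xstar : Fin T → Fin P → ℝ) (zn : Fin T → Fin M → ℝ)
        (y : Fin T → Fin M → ℝ) (ε : ℝ) (xhat : Fin T → Fin P → ℝ)
        (I : Finset (Fin P)),
        0 ≤ ε →
        (∀ t, ∀ v : Fin P → ℝ, IsSparse (2 * k) v →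
          (1 - δ) * ∑ p, v p ^ 2 ≤ ∑ j, (A t).mulVec v j ^ 2 ∧
            ∑ j, (A t).mulVec v j ^ 2 ≤ (1 + δ) * ∑ p, v p ^ 2) →
        (∀ t, y t = (A t).mulVec (xstar t) + zn t) →
        (∀ t, Real.sqrt (∑ j, zn t j ^ 2) ≤ ε) →
        Feasible A y ε xhat →
        (∀ x : Fin T → Fin P → ℝ, Feasible A y ε x → Fobj xhat ≤ Fobj x) →
        I.card ≤ k →
        (1 / (T : ℝ)) * ∑ t : Fin T, Real.sqrt (∑ p, (xstar t p - xhat t p) ^ 2) ≤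
          C * ((∑ p ∈ Iᶜ, |xstar 0 p|) +
              ∑ t : Fin (T - 1), ∑ p ∈ Iᶜ, |gradT xstar t p|) / Real.sqrt k +
            C' * T * ε := by
  obtain ⟨hδ1, hγ⟩ :=
    two_mul_div_one_sub_mul_lt_one (Nat.one_le_cast.2 (Nat.pos_of_neZero T)) hδ0 hδ
  set α := √(1 + δ) / (1 - δ)
  set β := √2 * δ / (1 - δ)
  have hβ : 0 ≤ β := div_nonneg (by positivity) (by linarith)
  have hα : 0 < α := div_pos (Real.sqrt_pos.2 (by linarith)) (by linarith)
  set C := 2 * (β + 1) / (1 - 2 * β * T)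
  have hC : 0 < C := div_pos (by positivity) (by linarith)
  refine ⟨C, (C + 1) * α * 2, hC, by positivity, ?_⟩
  intro P M A xstar zn y ε xhat I hε hA hy hz hfeas hmin hI
  have hstar := feasible_of_noise hy hz
  have hk' : (0 : ℝ) < √k := Real.sqrt_pos.2 (by exact_mod_cast hk)
  have hframe := fun t => SatisfiesRIP.frame_bound (hA t) hk hδ0.le hδ1 hI
    (hstar.sqrt_sum_sq_mulVec_sub_le hfeas t)
  have hcone := sum_compl_abs_sub_le (hmin xstar hstar) hI
  have := mean_le_of_frame_bounds (e := (∑ p ∈ Iᶜ, pixelTV xstar p) / √k) hβ hγ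
    (by positivity) (fun t => (hframe t).1) (fun t => (hframe t).2) fun t => by
      rw [div_le_iff₀ hk', add_mul, mul_assoc 2 (_ / √k), div_mul_cancel₀ _ hk'.ne']
      linarith [hcone t]
  rw [sum_pixelTV] at this
  simp only [Pi.sub_apply] at this
  convert this using 2 <;> ring
end
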